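/- Let Ω be a compact metric space, E a finite-dimensional real inner product space, ε > 0, and G : E × Ω → E jointly continuous such that ⟪G(a,ω) − G(b,ω), a − b⟫ ≤ −ε‖a − b‖² for all a, b ∈ E and all ω ∈ Ω. Let (μₙ) and μ be Borel probability measures on Ω with μₙ converging weakly to μ, and let aₙ, a ∈ E satisfy ∫ G(aₙ, ω) dμₙ(ω) = 0 for each n and ∫ G(a, ω) dμ(ω) = 0. Then aₙ → a. -/

import Mathlib

open MeasureTheory Filter
open scoped RealInnerProductSpace InnerProductSpace Topology

/-! The integrated map `x ↦ ∫ G (x, ω) ∂ν` inherits the strong monotonicity of `G` for every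
probability measure `ν`, so `ε ‖aₙ - a‖ ≤ ‖∫ G (aₙ, ω) ∂μₙ - ∫ G (a, ω) ∂μₙ‖ = ‖∫ G (a, ω) ∂μₙ‖`.
By weak convergence, tested coordinatewise in an orthonormal basis of `E`, the right-hand side
tends to `‖∫ G (a, ω) ∂μ‖ = 0`. -/

theorem OrthonormalBasis.tendsto_of_forall_inner_tendsto {𝕜 E ι α : Type*} [RCLike 𝕜]
    [NormedAddCommGroup E] [InnerProductSpace 𝕜 E] [Fintype ι] (b : OrthonormalBasis ι 𝕜 E)
    {l : Filter α} {f : α → E} {x : E}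
    (h : ∀ i, Tendsto (fun n => ⟪b i, f n⟫_𝕜) l (𝓝 ⟪b i, x⟫_𝕜)) :
    Tendsto f l (𝓝 x) := by
  have hsum := tendsto_finsetSum Finset.univ fun i _ => (h i).smul_const (b i)
  simpa only [b.sum_repr'] using hsum

section WeakConvergence

variable {Ω ι E : Type*} [TopologicalSpace Ω] [MeasurableSpace Ω]
  [NormedAddCommGroup E] [InnerProductSpace ℝ E] [FiniteDimensional ℝ E]

theorem tendsto_integral_of_forall_tendsto_integral_real {l : Filter ι} {μs : ι → Measure Ω}
    {μ : Measure Ω}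
    (hweak : ∀ f : Ω → ℝ, Continuous f →
      Tendsto (fun n => ∫ ω, f ω ∂(μs n)) l (𝓝 (∫ ω, f ω ∂μ)))
    {F : Ω → E} (hF : Continuous F) (hFμs : ∀ n, Integrable F (μs n)) (hFμ : Integrable F μ) :
    Tendsto (fun n => ∫ ω, F ω ∂(μs n)) l (𝓝 (∫ ω, F ω ∂μ)) := by
  refine (stdOrthonormalBasis ℝ E).tendsto_of_forall_inner_tendsto fun i => ?_
  simpa only [integral_inner (hFμs _), integral_inner hFμ] using
    hweak _ (continuous_const.inner hF)

end WeakConvergence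

theorem mul_norm_le_norm_of_inner_le_neg_mul_sq {E : Type*} [NormedAddCommGroup E]
    [InnerProductSpace ℝ E] {u v : E} {ε : ℝ} (h : ⟪u, v⟫ ≤ -ε * ‖v‖ ^ 2) : ε * ‖v‖ ≤ ‖u‖ := by
  rcases (norm_nonneg v).eq_or_lt with hv | hv
  · simp [← hv]
  · have hcs := (abs_le.1 (abs_real_inner_le_norm u v)).1
    nlinarith

section StrongMonotonicity

variable {Ω E : Type*} [MeasurableSpace Ω] [NormedAddCommGroup E] [InnerProductSpace ℝ E]
  [CompleteSpace E]

theorem inner_integral_le_of_forall_inner_le (ν : Measure Ω) [IsProbabilityMeasure ν]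
    {f : Ω → E} (hf : Integrable f ν) (v : E) {c : ℝ} (h : ∀ ω, ⟪f ω, v⟫ ≤ c) :
    ⟪∫ ω, f ω ∂ν, v⟫ ≤ c := by
  calc ⟪∫ ω, f ω ∂ν, v⟫ = ∫ ω, ⟪f ω, v⟫ ∂ν := by
        simp_rw [real_inner_comm v]; exact (integral_inner hf v).symm
    _ ≤ ∫ _, c ∂ν := integral_mono (hf.inner_const v) (integrable_const c) h
    _ = c := by simp

theorem mul_norm_sub_le_norm_integral_sub (ν : Measure Ω) [IsProbabilityMeasure ν]
    {G : E × Ω → E} {ε : ℝ} {x y : E}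
    (hmono : ∀ ω, ⟪G (x, ω) - G (y, ω), x - y⟫ ≤ -ε * ‖x - y‖ ^ 2)
    (hx : Integrable (fun ω => G (x, ω)) ν) (hy : Integrable (fun ω => G (y, ω)) ν) :
    ε * ‖x - y‖ ≤ ‖∫ ω, G (x, ω) ∂ν - ∫ ω, G (y, ω) ∂ν‖ := by
  refine mul_norm_le_norm_of_inner_le_neg_mul_sq ?_
  rw [← integral_sub hx hy]
  exact inner_integral_le_of_forall_inner_le ν (hx.sub hy) _ hmono

end StrongMonotonicity

/-- Let `Ω` be a compact metric space, `E` a finite-dimensional real inner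
product space, and `G : E × Ω → E` jointly continuous and uniformly strongly monotone in the
action. If Borel probability measures `μₙ` converge weakly to `μ` (tested against all continuous
real functions) and `aₙ`, `a` solve the respective first-order conditions
`∫ G (aₙ, ω) ∂μₙ = 0`, `∫ G (a, ω) ∂μ = 0`, then `aₙ → a`. -/
theorem stmt2
    {Ω : Type*} [MetricSpace Ω] [CompactSpace Ω] [MeasurableSpace Ω] [BorelSpace Ω]
    {E : Type*} [NormedAddCommGroup E] [InnerProductSpace ℝ E] [FiniteDimensional ℝ E]
    (ε : ℝ) (hε : 0 < ε)
    (G : E × Ω → E) (hG : Continuous G)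
    (hmono : ∀ a b : E, ∀ ω : Ω, ⟪G (a, ω) - G (b, ω), a - b⟫ ≤ -ε * ‖a - b‖ ^ 2)
    (μn : ℕ → Measure Ω) (μ : Measure Ω)
    (hμn : ∀ n, IsProbabilityMeasure (μn n)) (hμ : IsProbabilityMeasure μ)
    (hweak : ∀ f : Ω → ℝ, Continuous f →
      Tendsto (fun n => ∫ ω, f ω ∂(μn n)) atTop (nhds (∫ ω, f ω ∂μ)))
    (an : ℕ → E) (a : E)
    (han : ∀ n, ∫ ω, G (an n, ω) ∂(μn n) = 0)
    (ha : ∫ ω, G (a, ω) ∂μ = 0) :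
    Tendsto an atTop (nhds a) := by
  have hGc (c : E) : Continuous fun ω => G (c, ω) := by fun_prop
  have hint (c : E) (ν : Measure Ω) [IsFiniteMeasure ν] : Integrable (fun ω => G (c, ω)) ν :=
    (hGc c).integrable_of_hasCompactSupport (.of_compactSpace _)
  have hlim : Tendsto (fun n => ‖∫ ω, G (a, ω) ∂(μn n)‖ / ε) atTop (𝓝 0) := by
    have := tendsto_integral_of_forall_tendsto_integral_real hweak (hGc a)
      (fun n => hint a (μn n)) (hint a μ)
    simpa [ha] using this.norm.div_const ε
  have hbound (n : ℕ) : ‖an n - a‖ ≤ ‖∫ ω, G (a, ω) ∂(μn n)‖ / ε := by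
    have := mul_norm_sub_le_norm_integral_sub (μn n) (hmono (an n) a)
      (hint (an n) (μn n)) (hint a (μn n))
    rw [han n, zero_sub, norm_neg] at this
    rwa [le_div_iff₀ hε, mul_comm]
  exact tendsto_iff_norm_sub_tendsto_zero.2 <|
    squeeze_zero (fun n => norm_nonneg _) hbound hlim
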